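/- arXiv:2006.12957 — 3 statements merged into one kernel-verified Lean document; each statement's English description precedes it below -/
import Mathlib

section
/- If λ > 0, γ > 0 and m ≤ q, then the zero solution is unstable: there exist ε > 0 and t1 ≥ t0 such that for every δ ∈ (0,ε), every admissible solution with v(t1) = δ satisfies v(t) ≥ ε for some t ≥ t1. -/
/-! While `v < ε`, the remainder is at most `M·(2ε)` times the two leading terms, which for
`ε = min γ λ / (4M)` leaves at least half of them; since `m ≤ q`, the leading term
`γ t^{-m/q} v^s` dominates `t⁻¹ v^s`. So `v` increases, hence `v ≥ δ`, hence
`v' ≥ c δ^s / t`, and `v` grows like `log t`, contradicting `v ≤ d0`. -/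

/-- An admissible solution of the reduced equation
`v'(t) = γ·t^{−m/q}·v(t)^s + λ·t^{−n/q}·v(t) + ρ(t)` on `[t0,∞)` with values in
`[0,d0]`, where `|ρ(t)| ≤ M·(t^{−m/q}·v(t)^s + t^{−n/q}·v(t))·(v(t) + t^{−1/q})`. -/
def IsAdmissible (q m n s : ℕ) (γ lam d0 t0 M : ℝ) (v : ℝ → ℝ) : Prop :=
  (∀ t ≥ t0, v t ∈ Set.Icc (0:ℝ) d0) ∧
  ∃ ρ : ℝ → ℝ,
    (∀ t ≥ t0, |ρ t| ≤
      M * (t ^ (-(m:ℝ)/(q:ℝ)) * v t ^ s + t ^ (-(n:ℝ)/(q:ℝ)) * v t)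
        * (v t + t ^ (-(1:ℝ)/(q:ℝ)))) ∧
    (∀ t ≥ t0, HasDerivAt v
      (γ * t ^ (-(m:ℝ)/(q:ℝ)) * v t ^ s + lam * t ^ (-(n:ℝ)/(q:ℝ)) * v t + ρ t) t)

open Real Set Filter

lemma monotoneOn_Ici_of_hasDerivAt_nonneg {f f' : ℝ → ℝ} {a : ℝ}
    (hf : ∀ t ≥ a, HasDerivAt f (f' t) t) (hf' : ∀ t ≥ a, 0 ≤ f' t) :
    MonotoneOn f (Ici a) :=
  monotoneOn_of_hasDerivWithinAt_nonneg (convex_Ici a)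
    (fun t ht => (hf t ht).continuousAt.continuousWithinAt)
    (fun t ht => (hf t (interior_Ici.subset ht).le).hasDerivWithinAt)
    (fun t ht => hf' t (interior_Ici.subset ht).le)

lemma add_mul_log_sub_le_of_hasDerivAt {v v' : ℝ → ℝ} {t1 K : ℝ} (ht1 : 0 < t1)
    (hv : ∀ t ≥ t1, HasDerivAt v (v' t) t) (hv' : ∀ t ≥ t1, K * t⁻¹ ≤ v' t) {t : ℝ}
    (ht : t1 ≤ t) : v t1 + K * (log t - log t1) ≤ v t := by
  have hmono : MonotoneOn (fun x => v x - K * log x) (Ici t1) :=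
    monotoneOn_Ici_of_hasDerivAt_nonneg
      (fun x hx => (hv x hx).sub ((hasDerivAt_log (ht1.trans_le hx).ne').const_mul K))
      (fun x hx => sub_nonneg.mpr (hv' x hx))
  have := hmono self_mem_Ici ht ht
  simp only at this
  linarith

lemma tendsto_atTop_of_hasDerivAt_ge_mul_inv_mul_pow {v v' : ℝ → ℝ} {t1 c : ℝ} (s : ℕ)
    (ht1 : 0 < t1) (hc : 0 < c) (hv1 : 0 < v t1) (hv0 : ∀ t ≥ t1, 0 ≤ v t)
    (hv : ∀ t ≥ t1, HasDerivAt v (v' t) t) (hv' : ∀ t ≥ t1, c * (t⁻¹ * v t ^ s) ≤ v' t) :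
    Tendsto v atTop atTop := by
  have hmono : MonotoneOn v (Ici t1) :=
    monotoneOn_Ici_of_hasDerivAt_nonneg hv fun t ht =>
      (by have := hv0 t ht; have := ht1.trans_le ht; positivity : 0 ≤ c * (t⁻¹ * v t ^ s)).trans
        (hv' t ht)
  have hlower : ∀ t ≥ t1, c * v t1 ^ s * t⁻¹ ≤ v' t := fun t ht => by
    have htpos : 0 < t := ht1.trans_le ht
    calc c * v t1 ^ s * t⁻¹ = c * (t⁻¹ * v t1 ^ s) := by ring
      _ ≤ c * (t⁻¹ * v t ^ s) := by gcongr; exact hmono self_mem_Ici ht ht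
      _ ≤ v' t := hv' t ht
  have hlog : Tendsto (fun t => v t1 + c * v t1 ^ s * (log t - log t1)) atTop atTop :=
    tendsto_atTop_add_const_left _ _ <|
      (tendsto_atTop_add_const_right _ _ tendsto_log_atTop).const_mul_atTop (by positivity)
  exact tendsto_atTop_mono' _ ((eventually_ge_atTop t1).mono fun t ht =>
    add_mul_log_sub_le_of_hasDerivAt ht1 hv hlower ht) hlog

lemma inv_le_rpow_neg_div {m q : ℕ} (hq : 0 < q) (hmq : m ≤ q) {t : ℝ} (ht : 1 ≤ t) :
    t⁻¹ ≤ t ^ (-(m:ℝ)/(q:ℝ)) := by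
  rw [← rpow_neg_one]
  refine rpow_le_rpow_of_exponent_le ht ?_
  rw [neg_div, neg_le_neg_iff, div_le_one (by exact_mod_cast hq)]
  exact_mod_cast hmq

lemma rpow_neg_one_div_le {q : ℕ} (hq : 0 < q) {ε t : ℝ} (hε : 0 < ε) (ht : ε⁻¹ ^ q ≤ t) :
    t ^ (-(1:ℝ)/(q:ℝ)) ≤ ε := by
  have hroot : ε⁻¹ ≤ t ^ ((1:ℝ)/(q:ℝ)) := by
    calc ε⁻¹ = (ε⁻¹ ^ q) ^ ((1:ℝ)/(q:ℝ)) := by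
          rw [← rpow_natCast, ← rpow_mul (by positivity), mul_one_div,
            div_self (by exact_mod_cast hq.ne'), rpow_one]
      _ ≤ t ^ ((1:ℝ)/(q:ℝ)) := by gcongr
  rw [neg_div, rpow_neg ((by positivity : (0:ℝ) ≤ ε⁻¹ ^ q).trans ht)]
  exact inv_le_of_inv_le₀ hε hroot

lemma half_min_mul_add_le {γ lam x y c ρ : ℝ} (hx : 0 ≤ x) (hy : 0 ≤ y)
    (hc : c ≤ min γ lam / 2) (hρ : |ρ| ≤ (x + y) * c) :
    min γ lam / 2 * (x + y) ≤ γ * x + lam * y + ρ := by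
  have hγ : min γ lam * x ≤ γ * x := mul_le_mul_of_nonneg_right (min_le_left _ _) hx
  have hlam : min γ lam * y ≤ lam * y := mul_le_mul_of_nonneg_right (min_le_right _ _) hy
  have hρc : (x + y) * c ≤ (x + y) * (min γ lam / 2) :=
    mul_le_mul_of_nonneg_left hc (add_nonneg hx hy)
  linarith [neg_abs_le ρ]

lemma half_min_mul_inv_mul_pow_le {q m n s : ℕ} (hq : 0 < q) (hmq : m ≤ q)
    {γ lam M ε t u ρ : ℝ} (hM : 0 ≤ M) (hε : 0 < ε) (hMε : M * (2 * ε) ≤ min γ lam / 2)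
    (ht : max 1 (ε⁻¹ ^ q) ≤ t) (hu : u ∈ Ico 0 ε)
    (hρ : |ρ| ≤ M * (t ^ (-(m:ℝ)/(q:ℝ)) * u ^ s + t ^ (-(n:ℝ)/(q:ℝ)) * u)
      * (u + t ^ (-(1:ℝ)/(q:ℝ)))) :
    min γ lam / 2 * (t⁻¹ * u ^ s) ≤
      γ * t ^ (-(m:ℝ)/(q:ℝ)) * u ^ s + lam * t ^ (-(n:ℝ)/(q:ℝ)) * u + ρ := by
  obtain ⟨ht1, htε⟩ := max_le_iff.mp ht
  have htpos : 0 < t := one_pos.trans_le ht1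
  have hx : 0 ≤ t ^ (-(m:ℝ)/(q:ℝ)) * u ^ s := by have := hu.1; positivity
  have hy : 0 ≤ t ^ (-(n:ℝ)/(q:ℝ)) * u := by have := hu.1; positivity
  have hc : M * (u + t ^ (-(1:ℝ)/(q:ℝ))) ≤ min γ lam / 2 :=
    le_trans (mul_le_mul_of_nonneg_left
      (by linarith [hu.2, rpow_neg_one_div_le hq hε htε]) hM) hMε
  have hmain := half_min_mul_add_le hx hy hc (hρ.trans_eq (by ring))
  have hL : 0 ≤ min γ lam / 2 := (by positivity : 0 ≤ M * (2 * ε)).trans hMε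
  calc min γ lam / 2 * (t⁻¹ * u ^ s)
      ≤ min γ lam / 2 * (t ^ (-(m:ℝ)/(q:ℝ)) * u ^ s + t ^ (-(n:ℝ)/(q:ℝ)) * u) := by
        refine mul_le_mul_of_nonneg_left (le_add_of_le_of_nonneg ?_ hy) hL
        exact mul_le_mul_of_nonneg_right (inv_le_rpow_neg_div hq hmq ht1)
          (pow_nonneg hu.1 s)
    _ ≤ _ := by simpa only [mul_assoc] using hmain

theorem instability_of_zero_nonlinear_case_general
    (q m n s : ℕ) (hq : 0 < q) (hmq : m ≤ q)
    (γ lam d0 t0 M : ℝ) (hγ : 0 < γ) (hlam : 0 < lam)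
    (hM : 0 < M) :
    ∃ ε > 0, ∃ t1 ≥ t0, ∀ δ ∈ Set.Ioo (0:ℝ) ε,
      ∀ v : ℝ → ℝ, IsAdmissible q m n s γ lam d0 t0 M v → v t1 = δ →
        ∃ t ≥ t1, ε ≤ v t := by
  have hL : 0 < min γ lam := lt_min hγ hlam
  set ε := min γ lam / (4 * M)
  have hε : 0 < ε := by positivity
  have hMε : M * (2 * ε) ≤ min γ lam / 2 := by
    unfold ε; field_simp; linarith
  refine ⟨ε, hε, max t0 (max 1 (ε⁻¹ ^ q)), le_max_left _ _, ?_⟩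
  rintro δ ⟨hδ, -⟩ v ⟨hrange, ρ, hρ, hderiv⟩ rfl
  by_contra! hsmall
  set t1 := max t0 (max 1 (ε⁻¹ ^ q))
  have ht0 : ∀ t ≥ t1, t ≥ t0 := fun t ht => (le_max_left _ _).trans ht
  have hgrowth : Tendsto v atTop atTop :=
    tendsto_atTop_of_hasDerivAt_ge_mul_inv_mul_pow s
      ((one_pos.trans_le (le_max_left _ _)).trans_le (le_max_right _ _)) (half_pos hL) hδ
      (fun t ht => (hrange t (ht0 t ht)).1) (fun t ht => hderiv t (ht0 t ht))
      (fun t ht => half_min_mul_inv_mul_pow_le hq hmq hM.le hε hMε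
        ((le_max_right _ _).trans ht) ⟨(hrange t (ht0 t ht)).1, hsmall t ht⟩ (hρ t (ht0 t ht)))
  obtain ⟨t, hvt, ht⟩ := ((hgrowth.eventually_gt_atTop d0).and (eventually_ge_atTop t0)).exists
  exact (hrange t ht).2.not_gt hvt

/-- if `λ > 0`, `γ > 0` and `m ≤ q` the zero solution is
unstable. -/
theorem instability_of_zero_nonlinear_case
    (q m n s : ℕ) (hq : 0 < q) (hm : 0 < m) (hmn : m < n) (hs : 2 ≤ s) (hmq : m ≤ q)
    (γ lam d0 t0 M : ℝ) (hγ : 0 < γ) (hlam : 0 < lam)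
    (hd0 : 0 < d0) (ht0 : 0 < t0) (hM : 0 < M) :
    ∃ ε > 0, ∃ t1 ≥ t0, ∀ δ ∈ Set.Ioo (0:ℝ) ε,
      ∀ v : ℝ → ℝ, IsAdmissible q m n s γ lam d0 t0 M v → v t1 = δ →
        ∃ t ≥ t1, ε ≤ v t :=
  instability_of_zero_nonlinear_case_general q m n s hq hmq γ lam d0 t0 M hγ hlam hM
end

section
/- Suppose m < q < n and γ < 0, and set η = (q−m)/(q(s−1)). Then the zero solution is polynomially stable: there exist δ > 0, t1 ≥ t0 and K > 0 such that every admissible solution with v(t1) ≤ δ satisfies v(t) ≤ K·t^{−η} for all t ≥ t1. -/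
/-!
Barrier argument. Take the barrier `B t = K t^{-η}`; `η` is chosen so that
`t^{-m/q} B^s` and `B'` are both multiples of `t^{-η-1}`, and `K` so that `γ K^{s-1} = -(η+1)`.
At a time `x` where `v` touches `B`, admissibility gives
`v' x ≤ K x^{-η-1} (γ K^{s-1} + ε x)` with `ε x → 0` (because `n > q`), so for large `x`
this is `< -η K x^{-η-1} = B' x`. Hence a solution that starts below `B` at a late time `t1`
can never cross it.
-/

open Filter Topology

theorem le_of_hasDerivAt_of_contact_lt {f f' B B' : ℝ → ℝ} {a : ℝ}
    (hf : ∀ x ≥ a, HasDerivAt f (f' x) x) (hB : ∀ x ≥ a, HasDerivAt B (B' x) x)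
    (ha : f a ≤ B a) (contact : ∀ x ≥ a, f x = B x → f' x < B' x) {x : ℝ} (hx : a ≤ x) :
    f x ≤ B x :=
  image_le_of_deriv_right_lt_deriv_boundary'
    (fun y hy => (hf y hy.1).continuousAt.continuousWithinAt)
    (fun y hy => (hf y hy.1).hasDerivWithinAt) ha
    (fun y hy => (hB y hy.1).continuousAt.continuousWithinAt)
    (fun y hy => (hB y hy.1).hasDerivWithinAt)
    (fun y hy => contact y hy.1) ⟨hx, le_rfl⟩

noncomputable def reducedMajorant (γ L M p r c : ℝ) (s : ℕ) (t y : ℝ) : ℝ :=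
  γ * t ^ (-p) * y ^ s + L * t ^ (-r) * y
    + M * (t ^ (-p) * y ^ s + t ^ (-r) * y) * (y + t ^ (-c))

theorem IsAdmissible.exists_hasDerivAt_le {q m n s : ℕ} {γ lam d0 t0 M : ℝ} {v : ℝ → ℝ}
    (hv : IsAdmissible q m n s γ lam d0 t0 M v) :
    ∃ v' : ℝ → ℝ, (∀ t ≥ t0, HasDerivAt v (v' t) t) ∧
      ∀ t ≥ t0, 0 < t → v' t ≤ reducedMajorant γ |lam| |M| (m / q) (n / q) (1 / q) s t (v t) := by
  obtain ⟨hrange, ρ, hρ, hderiv⟩ := hv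
  refine ⟨_, hderiv, fun t ht htpos => ?_⟩
  have hvt : 0 ≤ v t := (hrange t ht).1
  simp only [reducedMajorant, neg_div] at hρ ⊢
  have hlam : lam * t ^ (-(n / q : ℝ)) * v t ≤ |lam| * t ^ (-(n / q : ℝ)) * v t := by
    gcongr
    exact le_abs_self lam
  have hρ' : ρ t ≤ |M| * (t ^ (-(m / q : ℝ)) * v t ^ s + t ^ (-(n / q : ℝ)) * v t)
      * (v t + t ^ (-(1 / q : ℝ))) := by
    calc ρ t ≤ |ρ t| := le_abs_self _
      _ ≤ _ := hρ t ht
      _ ≤ _ := by gcongr; exact le_abs_self M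
  linarith

theorem rpow_neg_mul_const_mul_rpow_neg_pow {x K η p : ℝ} {s : ℕ} (hx : 0 < x)
    (hbalance : p + η * s = η + 1) :
    x ^ (-p) * (K * x ^ (-η)) ^ s = K ^ s * x ^ (-η - 1) := by
  rw [mul_pow, ← Real.rpow_natCast (x ^ (-η)), ← Real.rpow_mul hx.le, mul_left_comm,
    ← Real.rpow_add hx]
  congr 2
  linarith

theorem reducedMajorant_barrier_lt {γ L M K η p r c x : ℝ} {s : ℕ} (hs : 1 ≤ s) (hx : 0 < x)
    (hK : 0 < K) (hbalance : p + η * s = η + 1) (hγK : γ * K ^ (s - 1) = -(η + 1))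
    (hsmall : L * x ^ (-(r - 1)) + M * (K ^ (s - 1) + x ^ (-(r - 1)))
      * (K * x ^ (-η) + x ^ (-c)) < 1) :
    reducedMajorant γ L M p r c s x (K * x ^ (-η)) < K * (-η * x ^ (-η - 1)) := by
  have hlin : x ^ (-r) * x ^ (-η) = x ^ (-(r - 1)) * x ^ (-η - 1) := by
    rw [← Real.rpow_add hx, ← Real.rpow_add hx]
    ring_nf
  have hKs : K ^ s = K ^ (s - 1) * K := by rw [← pow_succ, Nat.sub_add_cancel hs]
  have hfactor : reducedMajorant γ L M p r c s x (K * x ^ (-η))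
      = K * x ^ (-η - 1) * (γ * K ^ (s - 1) + (L * x ^ (-(r - 1))
        + M * (K ^ (s - 1) + x ^ (-(r - 1))) * (K * x ^ (-η) + x ^ (-c)))) := by
    rw [reducedMajorant, mul_assoc γ, rpow_neg_mul_const_mul_rpow_neg_pow hx hbalance, hKs]
    linear_combination (L * K + M * K * (K * x ^ (-η) + x ^ (-c))) * hlin
  have hpos : 0 < K * x ^ (-η - 1) := by positivity
  rw [hfactor, hγK]
  nlinarith

theorem tendsto_rpow_neg_error {a η c : ℝ} (ha : 0 < a) (hη : 0 < η) (hc : 0 < c)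
    (L M A K : ℝ) :
    Tendsto (fun x : ℝ => L * x ^ (-a) + M * (A + x ^ (-a)) * (K * x ^ (-η) + x ^ (-c)))
      atTop (𝓝 0) := by
  have h := ((tendsto_rpow_neg_atTop ha).const_mul L).add
    ((((tendsto_rpow_neg_atTop ha).const_add A).const_mul M).mul
      (((tendsto_rpow_neg_atTop hη).const_mul K).add (tendsto_rpow_neg_atTop hc)))
  simpa using h

theorem exists_pos_mul_pow_eq_neg {γ a : ℝ} (hγ : γ < 0) (ha : 0 < a) {k : ℕ} (hk : k ≠ 0) :
    ∃ K > 0, γ * K ^ k = -a := by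
  have hpos : 0 < a / -γ := div_pos ha (neg_pos.2 hγ)
  refine ⟨(a / -γ) ^ (k⁻¹ : ℝ), Real.rpow_pos_of_pos hpos _, ?_⟩
  rw [Real.rpow_inv_natCast_pow hpos.le hk]
  field_simp [hγ.ne]

theorem pos_and_balance_of_eq_div {q m s : ℕ} {η : ℝ} (hmq : m < q) (hs : 2 ≤ s)
    (hη : η = ((q : ℝ) - m) / (q * ((s : ℝ) - 1))) :
    0 < η ∧ (m / q : ℝ) + η * s = η + 1 := by
  have hq : (0 : ℝ) < q := by exact_mod_cast (Nat.zero_le m).trans_lt hmq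
  have hmq' : (m : ℝ) < q := by exact_mod_cast hmq
  have hs' : (2 : ℝ) ≤ s := by exact_mod_cast hs
  have hs1 : (s : ℝ) - 1 ≠ 0 := by linarith
  subst hη
  refine ⟨div_pos (by linarith) (by nlinarith), ?_⟩
  field_simp
  ring

theorem polynomial_stability_m_lt_q_lt_n_general
    (q m n s : ℕ) (hmq : m < q) (hqn : q < n)
    (hs : 2 ≤ s)
    (γ lam d0 t0 M : ℝ) (hγ : γ < 0) :
    ∀ η : ℝ, η = ((q:ℝ) - (m:ℝ)) / ((q:ℝ) * ((s:ℝ) - 1)) →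
    ∃ δ > 0, ∃ t1 ≥ t0, ∃ K > 0,
      ∀ v : ℝ → ℝ, IsAdmissible q m n s γ lam d0 t0 M v → v t1 ≤ δ →
        ∀ t ≥ t1, v t ≤ K * t ^ (-η) := by
  intro η hη
  have hq : (0 : ℝ) < q := by exact_mod_cast (Nat.zero_le m).trans_lt hmq
  have hn : 0 < (n / q : ℝ) - 1 := by
    rw [sub_pos, one_lt_div hq]
    exact_mod_cast hqn
  obtain ⟨hη0, hbalance⟩ := pos_and_balance_of_eq_div hmq hs hη
  obtain ⟨K, hK, hγK⟩ := exists_pos_mul_pow_eq_neg hγ (by linarith : 0 < η + 1)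
    (by omega : s - 1 ≠ 0)
  obtain ⟨t1, ht1⟩ := eventually_atTop.1 <|
    (((tendsto_rpow_neg_error hn hη0 (one_div_pos.2 hq) |lam| |M| (K ^ (s - 1)) K).eventually
      (gt_mem_nhds one_pos)).and (eventually_ge_atTop t0)).and (eventually_gt_atTop 0)
  refine ⟨K * t1 ^ (-η), mul_pos hK (Real.rpow_pos_of_pos (ht1 t1 le_rfl).2 _), t1,
    (ht1 t1 le_rfl).1.2, K, hK, fun v hv hvt1 t ht => ?_⟩
  obtain ⟨v', hv', hv'le⟩ := hv.exists_hasDerivAt_le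
  refine le_of_hasDerivAt_of_contact_lt (fun x hx => hv' x (ht1 x hx).1.2)
    (fun x hx => (Real.hasDerivAt_rpow_const (Or.inl (ht1 x hx).2.ne')).const_mul K)
    hvt1 (fun x hx hvx => ?_) ht
  obtain ⟨⟨hsmall, hxt0⟩, hx⟩ := ht1 x hx
  calc v' x ≤ reducedMajorant γ |lam| |M| (m / q) (n / q) (1 / q) s x (v x) := hv'le x hxt0 hx
    _ < K * (-η * x ^ (-η - 1)) := by
      rw [hvx]
      exact reducedMajorant_barrier_lt (by omega) hx hK hbalance hγK hsmall

/-- if `m < q < n` and `γ < 0`, then with `η = (q−m)/(q(s−1))`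
the zero solution is polynomially stable: `v(t) ≤ K·t^{−η}`. -/
theorem polynomial_stability_m_lt_q_lt_n
    (q m n s : ℕ) (hq : 0 < q) (hm : 0 < m) (hmn : m < n) (hmq : m < q) (hqn : q < n)
    (hs : 2 ≤ s)
    (γ lam d0 t0 M : ℝ) (hγ : γ < 0) (hlam : lam ≠ 0)
    (hd0 : 0 < d0) (ht0 : 0 < t0) (hM : 0 < M) :
    ∀ η : ℝ, η = ((q:ℝ) - (m:ℝ)) / ((q:ℝ) * ((s:ℝ) - 1)) →
    ∃ δ > 0, ∃ t1 ≥ t0, ∃ K > 0,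
      ∀ v : ℝ → ℝ, IsAdmissible q m n s γ lam d0 t0 M v → v t1 ≤ δ →
        ∀ t ≥ t1, v t ≤ K * t ^ (-η) :=
  polynomial_stability_m_lt_q_lt_n_general q m n s hmq hqn hs γ lam d0 t0 M hγ
end

section
/- Suppose q ≤ m < n and γ < 0 (with λ of arbitrary sign). Then the zero solution is stable: for every ε ∈ (0,d0] there exist δ > 0 and t1 ≥ t0 such that every admissible solution with v(t1) ≤ δ satisfies 0 ≤ v(t) ≤ ε for all t ≥ t1. -/
/-!
Fix a level `0 < a ≤ ε` with `γ + M a < 0`. Writing `X = t^{-m/q}`, `Z = t^{-1/q}` and using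
`t^{-n/q} ≤ X Z` for `t ≥ 1` (because `n ≥ m + 1`), at any time where `v = a` the right-hand side
is at most `X a (γ a^{s-1} + |λ| Z + M (a^{s-1} + Z)(a + Z))`. As `t → ∞` the bracket tends to
`a^{s-1} (γ + M a) < 0`, so after some time `t1` the solution can never cross the level `a` upwards:
`v(t1) ≤ a` forces `v ≤ a ≤ ε` for all later times.
-/

open Filter Topology Set

theorem le_of_hasDerivAt_of_eq_imp_deriv_neg {v v' : ℝ → ℝ} {t₁ c : ℝ}
    (hv : ∀ t ≥ t₁, HasDerivAt v (v' t) t) (h₁ : v t₁ ≤ c)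
    (hc : ∀ t ≥ t₁, v t = c → v' t < 0) : ∀ t ≥ t₁, v t ≤ c := fun _ ht =>
  image_le_of_deriv_right_lt_deriv_boundary (B := fun _ => c)
    (fun x hx => (hv x hx.1).continuousAt.continuousWithinAt)
    (fun x hx => (hv x hx.1).hasDerivWithinAt) h₁ (fun _ => hasDerivAt_const _ c)
    (fun x hx => hc x hx.1) ⟨ht, le_rfl⟩

theorem rpow_neg_div_le_mul {q m n : ℕ} (hmn : m < n) {t : ℝ} (ht : 1 ≤ t) :
    t ^ (-(n:ℝ)/q) ≤ t ^ (-(m:ℝ)/q) * t ^ (-(1:ℝ)/q) := by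
  rw [← Real.rpow_add (by linarith), ← add_div]
  refine Real.rpow_le_rpow_of_exponent_le ht (div_le_div_of_nonneg_right ?_ q.cast_nonneg)
  have : (m:ℝ) + 1 ≤ n := by exact_mod_cast hmn
  linarith

theorem tendsto_rpow_neg_one_div_atTop {q : ℕ} (hq : 0 < q) :
    Tendsto (fun t : ℝ => t ^ (-(1:ℝ)/q)) atTop (𝓝 0) := by
  simpa only [neg_div] using tendsto_rpow_neg_atTop (by positivity : (0:ℝ) < 1 / q)

theorem reduced_rhs_le {s : ℕ} (hs : 1 ≤ s) {γ lam M X Y Z a ρ : ℝ} (hM : 0 ≤ M)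
    (hY : 0 ≤ Y) (hYXZ : Y ≤ X * Z) (hZ : 0 ≤ Z) (ha : 0 ≤ a)
    (hρ : |ρ| ≤ M * (X * a ^ s + Y * a) * (a + Z)) :
    γ * X * a ^ s + lam * Y * a + ρ ≤
      X * a * (γ * a ^ (s - 1) + |lam| * Z + M * (a ^ (s - 1) + Z) * (a + Z)) := by
  obtain ⟨k, rfl⟩ := Nat.exists_eq_add_of_le' hs
  have hlam : lam * Y * a ≤ |lam| * (X * Z) * a :=
    mul_le_mul_of_nonneg_right ((mul_le_mul_of_nonneg_right (le_abs_self lam) hY).trans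
      (mul_le_mul_of_nonneg_left hYXZ (abs_nonneg lam))) ha
  have hrem : ρ ≤ M * (X * a ^ (k + 1) + X * Z * a) * (a + Z) :=
    (le_abs_self ρ).trans (hρ.trans (by gcongr))
  simp only [Nat.add_sub_cancel]
  linear_combination hlam + hrem

theorem eventually_coeff_neg_of_tendsto_zero {ι : Type*} {l : Filter ι} {Z : ι → ℝ}
    (hZ : Tendsto Z l (𝓝 0)) (s : ℕ) {γ lam M a : ℝ} (ha : 0 < a) (hγa : γ + M * a < 0) :
    ∀ᶠ i in l, γ * a ^ s + |lam| * Z i + M * (a ^ s + Z i) * (a + Z i) < 0 := by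
  have hlim : Tendsto (fun i => γ * a ^ s + |lam| * Z i + M * (a ^ s + Z i) * (a + Z i)) l
      (𝓝 (a ^ s * (γ + M * a))) := by
    convert ((hZ.const_mul |lam|).const_add (γ * a ^ s)).add
      (((hZ.const_add (a ^ s)).const_mul M).mul (hZ.const_add a)) using 2
    simp only [mul_zero, add_zero]
    ring
  exact hlim.eventually_lt_const (mul_neg_of_pos_of_neg (by positivity) hγa)

theorem stability_q_le_m_lt_n_general
    (q m n s : ℕ) (hq : 0 < q) (hmn : m < n) (hs : 2 ≤ s)
    (γ lam d0 t0 M : ℝ) (hγ : γ < 0) (hM : 0 < M) :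
    ∀ ε ∈ Set.Ioc (0:ℝ) d0, ∃ δ > 0, ∃ t1 ≥ t0,
      ∀ v : ℝ → ℝ, IsAdmissible q m n s γ lam d0 t0 M v → v t1 ≤ δ →
        ∀ t ≥ t1, 0 ≤ v t ∧ v t ≤ ε := by
  rintro ε ⟨hε, -⟩
  set a := min ε (-γ / (2 * M))
  have ha : 0 < a := lt_min hε (div_pos (neg_pos.mpr hγ) (by positivity))
  have hMa : M * a ≤ -γ / 2 :=
    (mul_le_mul_of_nonneg_left (min_le_right _ _) hM.le).trans_eq (by field_simp)
  have hγa : γ + M * a < 0 := by linarith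
  obtain ⟨t1, ht1⟩ := eventually_atTop.mp
    ((eventually_coeff_neg_of_tendsto_zero (tendsto_rpow_neg_one_div_atTop hq) (s - 1) (lam := lam)
      ha hγa).and ((eventually_ge_atTop t0).and (eventually_ge_atTop 1)))
  have ht01 : t0 ≤ t1 := (ht1 t1 le_rfl).2.1
  refine ⟨a, ha, t1, ht01, fun v ⟨hrange, ρ, hρ, hv⟩ hv1 t ht => ⟨(hrange t (ht01.trans ht)).1, ?_⟩⟩
  refine (le_of_hasDerivAt_of_eq_imp_deriv_neg (fun x hx => hv x (ht01.trans hx)) hv1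
    (fun x hx hvx => ?_) t ht).trans (min_le_left _ _)
  obtain ⟨hneg, hx0, hx1⟩ := ht1 x hx
  have hxpos : 0 < x := one_pos.trans_le hx1
  have hρx := hρ x hx0
  rw [hvx] at hρx ⊢
  exact (reduced_rhs_le (by omega) hM.le (by positivity) (rpow_neg_div_le_mul hmn hx1)
    (by positivity) ha.le hρx).trans_lt (mul_neg_of_pos_of_neg (by positivity) hneg)

/-- if `q ≤ m < n` and `γ < 0` (with `λ` of arbitrary sign) the
zero solution is stable. -/
theorem stability_q_le_m_lt_n
    (q m n s : ℕ) (hq : 0 < q) (hm : 0 < m) (hqm : q ≤ m) (hmn : m < n) (hs : 2 ≤ s)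
    (γ lam d0 t0 M : ℝ) (hγ : γ < 0) (hlam : lam ≠ 0)
    (hd0 : 0 < d0) (ht0 : 0 < t0) (hM : 0 < M) :
    ∀ ε ∈ Set.Ioc (0:ℝ) d0, ∃ δ > 0, ∃ t1 ≥ t0,
      ∀ v : ℝ → ℝ, IsAdmissible q m n s γ lam d0 t0 M v → v t1 ≤ δ →
        ∀ t ≥ t1, 0 ≤ v t ∧ v t ≤ ε :=
  stability_q_le_m_lt_n_general q m n s hq hmn hs γ lam d0 t0 M hγ hM
end
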